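/- arXiv:2508.06449 — 6 statements merged into one kernel-verified Lean document; each statement's English description precedes it below -/
import Mathlib

section
/- Strengthened duplication: if A is a nonempty x-definable set and y₀ is any element, then there exists y₁ ∈ A with y₀ ⫫[x] y₁. -/
/-!
If no `y₁ ∈ A` were independent from `y₀` over `x`, the set `C` of such counterexamples would be
definable and would contain `y₀`, so `C × A` is a nonempty definable set. Duplication gives an
independent pair `⟨c₀, a₀⟩ ⫫[x] ⟨c₁, a₁⟩` in it, and heredity on both sides yields `c₀ ⫫[x] a₁`,
which contradicts `c₀ ∈ C`.
-/

theorem indep_fst_snd_of_indep_pair {Ω : Type*} (D : Ω → Set Ω) (pair : Ω → Ω → Ω)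
    (indep : Ω → Ω → Ω → Prop)
    (hpairL : ∀ x y z, y ∈ D (pair x (pair y z)))
    (hpairR : ∀ x y z, z ∈ D (pair x (pair y z)))
    (hsymm : ∀ x y₀ y₁, indep x y₀ y₁ → indep x y₁ y₀)
    (hhered : ∀ x y₀ y₁ y₀', y₀' ∈ D (pair x y₀) → indep x y₀ y₁ → indep x y₀' y₁)
    {x c₀ a₀ c₁ a₁ : Ω} (h : indep x (pair c₀ a₀) (pair c₁ a₁)) :
    indep x c₀ a₁ := by
  have hc₀ : indep x c₀ (pair c₁ a₁) := hhered _ _ _ _ (hpairL x c₀ a₀) h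
  have ha₁ : indep x a₁ c₀ := hhered _ _ _ _ (hpairR x c₁ a₁) (hsymm _ _ _ hc₀)
  exact hsymm _ _ _ ha₁

theorem strengthened_duplication_general {Ω : Type*}
    (D : Ω → Set Ω) (𝔇 : Ω → Set (Set Ω)) (pair : Ω → Ω → Ω)
    (indep : Ω → Ω → Ω → Prop)
    -- definable closure is monotone and contains the parameters of the tuple
    (hpairL : ∀ x y z, y ∈ D (pair x (pair y z)))
    (hpairR : ∀ x y z, z ∈ D (pair x (pair y z)))
    -- symmetry
    (hsymm : ∀ x y₀ y₁, indep x y₀ y₁ → indep x y₁ y₀)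
    -- heredity
    (hhered : ∀ x y₀ y₁ y₀', y₀' ∈ D (pair x y₀) → indep x y₀ y₁ → indep x y₀' y₁)
    -- duplication
    (hdup : ∀ x, ∀ A ∈ 𝔇 x, A.Nonempty → ∃ y₀ ∈ A, ∃ y₁ ∈ A, indep x y₀ y₁)
    -- `𝔇` is closed under (coded) products
    (hprodSet : ∀ x, ∀ B ∈ 𝔇 x, ∀ A ∈ 𝔇 x,
      {p | ∃ b ∈ B, ∃ a ∈ A, p = pair b a} ∈ 𝔇 x)
    -- the class of counterexamples to a definable property is again definable
    (hcex : ∀ x, ∀ A ∈ 𝔇 x, {y | ∀ y₁ ∈ A, ¬ indep x y y₁} ∈ 𝔇 x) :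
    ∀ (x y₀ : Ω), ∀ A ∈ 𝔇 x, A.Nonempty → ∃ y₁ ∈ A, indep x y₀ y₁ := by
  intro x y₀ A hA ⟨a, ha⟩
  by_contra! hy₀
  set C := {y | ∀ y₁ ∈ A, ¬ indep x y y₁}
  have hCA : {p | ∃ c ∈ C, ∃ a ∈ A, p = pair c a} ∈ 𝔇 x := hprodSet x C (hcex x A hA) A hA
  obtain ⟨_, ⟨c₀, hc₀, a₀, -, rfl⟩, _, ⟨c₁, -, a₁, ha₁, rfl⟩, hind⟩ :=
    hdup x _ hCA ⟨pair y₀ a, y₀, hy₀, a, ha, rfl⟩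
  exact hc₀ a₁ ha₁ (indep_fst_snd_of_indep_pair D pair indep hpairL hpairR hsymm hhered hind)

/-- Strengthened duplication: if `A` is a nonempty `x`-definable set
and `y₀` is any element, then there exists `y₁ ∈ A` with `y₀ ⫫[x] y₁`. -/
theorem strengthened_duplication {Ω : Type*}
    (D : Ω → Set Ω) (𝔇 : Ω → Set (Set Ω)) (pair : Ω → Ω → Ω)
    (indep : Ω → Ω → Ω → Prop)
    -- definable closure is monotone and contains the parameters of the tuple
    (hmono : ∀ x y, D x ⊆ D (pair x y))
    (hbase : ∀ x y, x ∈ D (pair x y))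
    (hpairL : ∀ x y z, y ∈ D (pair x (pair y z)))
    (hpairR : ∀ x y z, z ∈ D (pair x (pair y z)))
    -- symmetry
    (hsymm : ∀ x y₀ y₁, indep x y₀ y₁ → indep x y₁ y₀)
    -- heredity
    (hhered : ∀ x y₀ y₁ y₀', y₀' ∈ D (pair x y₀) → indep x y₀ y₁ → indep x y₀' y₁)
    -- transitivity
    (htrans : ∀ x y₀ y₁ z, indep x y₀ y₁ → indep (pair x y₀) z y₁ →
      indep x (pair y₀ z) y₁)
    -- duplication
    (hdup : ∀ x, ∀ A ∈ 𝔇 x, A.Nonempty → ∃ y₀ ∈ A, ∃ y₁ ∈ A, indep x y₀ y₁)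
    -- product property (pairs coded via `pair`)
    (hprod : ∀ x y₀ y₁, ∀ A ∈ 𝔇 x, indep x y₀ y₁ → pair y₀ y₁ ∈ A →
      ∃ B₀ ∈ 𝔇 x, ∃ B₁ ∈ 𝔇 x, y₀ ∈ B₀ ∧ y₁ ∈ B₁ ∧
        ∀ y₀' ∈ B₀, ∀ y₁' ∈ B₁, indep x y₀' y₁' → pair y₀' y₁' ∈ A)
    -- `𝔇` is closed under (coded) products
    (hprodSet : ∀ x, ∀ B ∈ 𝔇 x, ∀ A ∈ 𝔇 x,
      {p | ∃ b ∈ B, ∃ a ∈ A, p = pair b a} ∈ 𝔇 x)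
    -- the class of counterexamples to a definable property is again definable
    (hcex : ∀ x, ∀ A ∈ 𝔇 x, {y | ∀ y₁ ∈ A, ¬ indep x y y₁} ∈ 𝔇 x) :
    ∀ (x y₀ : Ω), ∀ A ∈ 𝔇 x, A.Nonempty → ∃ y₁ ∈ A, indep x y₀ y₁ :=
  strengthened_duplication_general D 𝔇 pair indep hpairL hpairR hsymm hhered hdup hprodSet hcex
end

section
/- Product refinement for independent tuples: let y⃗ be an n-tuple independent over x and let A ∈ 𝔇(x) be a set of n-tuples containing y⃗. Then there is an n-tuple B₀, …, B_{n−1} of sets in 𝔇(x) with yᵢ ∈ Bᵢ for each i, such that every n-tuple y⃗' independent over x with y'ᵢ ∈ Bᵢ for all i belongs to A. -/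
variable {Ω : Type*}

/-- The pairing of a finite tuple into a single element: a one-element tuple is its
entry, and longer tuples are folded with the pairing operation (`e` is a default
value for the empty tuple). -/
def tup (e : Ω) (pair : Ω → Ω → Ω) : List Ω → Ω
  | [] => e
  | [y] => y
  | y :: z :: ys => pair y (tup e pair (z :: ys))

/-- The sub-tuple of `y` given by the set `s` of positions (in increasing order). -/
def subtup (y : List Ω) (s : Finset ℕ) : List Ω :=
  (s.sort (· ≤ ·)).filterMap fun i => y[i]?

/-- A finite tuple `y` is independent over `x` if it has at most one entry, or for
any two nonempty non-overlapping sub-tuples `u₀`, `u₁` of `y`,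
`u₀ ⫫[x] u₁` holds (identifying tuples with their pairings). -/
def IndepTuple (indep : Ω → Ω → Ω → Prop) (e : Ω) (pair : Ω → Ω → Ω)
    (x : Ω) (y : List Ω) : Prop :=
  y.length ≤ 1 ∨
    ∀ s₀ s₁ : Finset ℕ, s₀.Nonempty → s₁.Nonempty →
      (∀ i ∈ s₀, i < y.length) → (∀ i ∈ s₁, i < y.length) → Disjoint s₀ s₁ →
      indep x (tup e pair (subtup y s₀)) (tup e pair (subtup y s₁))


lemma sort_image_succ (s : Finset ℕ) :
    (s.image Nat.succ).sort (· ≤ ·) = (s.sort (· ≤ ·)).map Nat.succ := by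
  refine (fun h1 h2 h3 => List.Perm.eq_of_pairwise' (r := (· ≤ ·)) h2 h3 h1) ?_ ?_ ?_
  · rw [← Multiset.coe_eq_coe, Finset.sort_eq, ← Multiset.map_coe, Finset.sort_eq,
      Finset.image_val_of_injOn (Function.Injective.injOn Nat.succ_injective)]
  · exact Finset.pairwise_sort _ _
  · rw [List.pairwise_map]
    exact (Finset.pairwise_sort s (· ≤ ·)).imp (fun h => Nat.succ_le_succ h)

lemma tup_cons (e : Ω) (pair : Ω → Ω → Ω) (a : Ω) (l : List Ω) (hl : l ≠ []) :
    tup e pair (a :: l) = pair a (tup e pair l) := by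
  cases l with
  | nil => exact absurd rfl hl
  | cons b t => rfl

lemma subtup_singleton_zero (a : Ω) (l : List Ω) :
    subtup (a :: l) {0} = [a] := by
  simp [subtup, Finset.sort_singleton]

lemma filterMap_range_get (l : List Ω) :
    (List.range l.length).filterMap (fun i => l[i]?) = l := by
  induction l with
  | nil => simp
  | cons a t ih =>
    rw [List.length_cons, List.range_succ_eq_map]
    simp only [List.filterMap_cons, List.getElem?_cons_zero, List.filterMap_map]
    rw [show ((fun i => (a :: t)[i]?) ∘ (· + 1)) = fun i => t[i]? from rfl]
    rw [ih]

lemma subtup_range (l : List Ω) : subtup l (Finset.range l.length) = l := by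
  rw [subtup, Finset.sort_range]; exact filterMap_range_get l

lemma subtup_image_succ (a : Ω) (l : List Ω) (s : Finset ℕ) :
    subtup (a :: l) (s.image Nat.succ) = subtup l s := by
  rw [subtup, subtup, sort_image_succ, List.filterMap_map]
  rfl

lemma indep_tail {indep : Ω → Ω → Ω → Prop} {e : Ω} {pair : Ω → Ω → Ω} {x a : Ω}
    {l : List Ω} (h : IndepTuple indep e pair x (a :: l)) :
    IndepTuple indep e pair x l := by
  rcases h with h | h
  · left; simp only [List.length_cons] at h; omega
  · by_cases hl : l.length ≤ 1
    · exact Or.inl hl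
    right
    intro s₀ s₁ h₀ h₁ b₀ b₁ hd
    have := h (s₀.image Nat.succ) (s₁.image Nat.succ) (h₀.image _) (h₁.image _)
      (by simp only [Finset.mem_image]; rintro i ⟨j, hj, rfl⟩
          simpa using Nat.succ_lt_succ (b₀ j hj))
      (by simp only [Finset.mem_image]; rintro i ⟨j, hj, rfl⟩
          simpa using Nat.succ_lt_succ (b₁ j hj))
      (Finset.disjoint_image Nat.succ_injective |>.mpr hd)
    rwa [subtup_image_succ, subtup_image_succ] at this

lemma indep_head_tail {indep : Ω → Ω → Ω → Prop} {e : Ω} {pair : Ω → Ω → Ω} {x a : Ω}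
    {l : List Ω} (h : IndepTuple indep e pair x (a :: l)) (hl : l ≠ []) :
    indep x a (tup e pair l) := by
  have hlen : 0 < l.length := List.length_pos_iff.mpr hl
  rcases h with h | h
  · simp only [List.length_cons] at h; omega
  · have := h {0} ((Finset.range l.length).image Nat.succ)
      ⟨0, Finset.mem_singleton_self 0⟩
      ((Finset.nonempty_range_iff.mpr (by omega)).image _)
      (by intro i hi; simp at hi; subst hi; simp only [List.length_cons]; omega)
      (by simp only [Finset.mem_image, Finset.mem_range]
          rintro i ⟨j, hj, rfl⟩; simpa using Nat.succ_lt_succ hj)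
      (by simp [Finset.disjoint_left])
    rwa [subtup_singleton_zero, subtup_image_succ, subtup_range] at this

/-- Product refinement for independent tuples: if `y⃗` is an `n`-tuple
independent over `x` lying in an `x`-definable set `A` of `n`-tuples (coded via
`tup`), then there are `x`-definable sets `B₀, …, B_{n−1}` with `yᵢ ∈ Bᵢ`, such that
every `n`-tuple independent over `x` selecting from the `Bᵢ` belongs to `A`. -/
theorem product_refinement_tuples {Ω : Type*}
    (D : Ω → Set Ω) (𝔇 : Ω → Set (Set Ω)) (e : Ω) (pair : Ω → Ω → Ω)
    (indep : Ω → Ω → Ω → Prop)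
    -- tupling/pairing is compatible with definable closure
    (hmono : ∀ x y, D x ⊆ D (pair x y))
    (hbase : ∀ x y, x ∈ D (pair x y))
    (hpairL : ∀ x y z, y ∈ D (pair x (pair y z)))
    (hpairR : ∀ x y z, z ∈ D (pair x (pair y z)))
    (hpair_mem : ∀ x y z, pair y z ∈ D (pair x (pair y z)))
    -- symmetry
    (hsymm : ∀ x y₀ y₁, indep x y₀ y₁ → indep x y₁ y₀)
    -- heredity
    (hhered : ∀ x y₀ y₁ y₀', y₀' ∈ D (pair x y₀) → indep x y₀ y₁ → indep x y₀' y₁)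
    -- transitivity
    (htrans : ∀ x y₀ y₁ z, indep x y₀ y₁ → indep (pair x y₀) z y₁ →
      indep x (pair y₀ z) y₁)
    -- strengthened duplication
    (hdup' : ∀ x y₀, ∀ A ∈ 𝔇 x, A.Nonempty → ∃ y₁ ∈ A, indep x y₀ y₁)
    -- product property
    (hprod : ∀ x y₀ y₁, ∀ A ∈ 𝔇 x, indep x y₀ y₁ → pair y₀ y₁ ∈ A →
      ∃ B₀ ∈ 𝔇 x, ∃ B₁ ∈ 𝔇 x, y₀ ∈ B₀ ∧ y₁ ∈ B₁ ∧
        ∀ y₀' ∈ B₀, ∀ y₁' ∈ B₁, indep x y₀' y₁' → pair y₀' y₁' ∈ A)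
    -- `𝔇` is closed under finite (coded) products
    (hprodSet : ∀ x, ∀ B ∈ 𝔇 x, ∀ A ∈ 𝔇 x,
      {p | ∃ b ∈ B, ∃ a ∈ A, p = pair b a} ∈ 𝔇 x) :
    ∀ (x : Ω) (n : ℕ) (y : Fin n → Ω), ∀ A ∈ 𝔇 x,
      IndepTuple indep e pair x (List.ofFn y) →
      tup e pair (List.ofFn y) ∈ A →
      ∃ B : Fin n → Set Ω, (∀ i, B i ∈ 𝔇 x) ∧ (∀ i, y i ∈ B i) ∧
        ∀ y' : Fin n → Ω, IndepTuple indep e pair x (List.ofFn y') →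
          (∀ i, y' i ∈ B i) → tup e pair (List.ofFn y') ∈ A := by

  intro x n
  induction n with
  | zero =>
    intro y A hA _ hmem
    exact ⟨fun i => i.elim0, fun i => i.elim0, fun i => i.elim0,
      fun y' _ _ => by simpa using hmem⟩
  | succ m ih =>
    intro y A hA hind hmem
    cases m with
    | zero =>
      refine ⟨fun _ => A, fun _ => hA, fun i => ?_, fun y' _ h' => ?_⟩
      · have h1 : List.ofFn y = [y 0] := by simp [List.ofFn_succ]
        rw [h1] at hmem
        have : i = 0 := Fin.eq_zero i
        rw [this]; exact hmem
      · have h1 : List.ofFn y' = [y' 0] := by simp [List.ofFn_succ]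
        rw [h1]; exact h' 0
    | succ k =>
      set t : Fin (k + 1) → Ω := fun i => y i.succ with ht
      have hofn : List.ofFn y = y 0 :: List.ofFn t := List.ofFn_succ (f := y)
      have hLne : List.ofFn t ≠ [] := by simp
      have htup : tup e pair (List.ofFn y) = pair (y 0) (tup e pair (List.ofFn t)) := by
        rw [hofn, tup_cons _ _ _ _ hLne]
      rw [hofn] at hind
      have hind' : indep x (y 0) (tup e pair (List.ofFn t)) := indep_head_tail hind hLne
      obtain ⟨B₀, hB₀, B₁, hB₁, hy0, hy1, hBprop⟩ :=
        hprod x (y 0) (tup e pair (List.ofFn t)) A hA hind' (htup ▸ hmem)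
      obtain ⟨C, hC, hyC, hCprop⟩ := ih t B₁ hB₁ (indep_tail hind) hy1
      refine ⟨Fin.cons B₀ C, fun i => ?_, fun i => ?_, fun y' hind'' hmem'' => ?_⟩
      · refine Fin.cases ?_ (fun j => ?_) i
        · simpa using hB₀
        · simpa using hC j
      · refine Fin.cases ?_ (fun j => ?_) i
        · simpa using hy0
        · simpa using hyC j
      · set t' : Fin (k + 1) → Ω := fun i => y' i.succ with ht'
        have hofn' : List.ofFn y' = y' 0 :: List.ofFn t' := List.ofFn_succ (f := y')
        have hLne' : List.ofFn t' ≠ [] := by simp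
        rw [hofn'] at hind''
        have h1 : tup e pair (List.ofFn t') ∈ B₁ :=
          hCprop t' (indep_tail hind'') (fun i => by simpa using hmem'' i.succ)
        have h2 : indep x (y' 0) (tup e pair (List.ofFn t')) := indep_head_tail hind'' hLne'
        have h3 := hBprop (y' 0) (by simpa using hmem'' 0) _ h1 h2
        rw [hofn', tup_cons _ _ _ _ hLne']
        exact h3
end

section
/- Product genericity from separation: let P₀, P₁ be partial orders, M a family of subsets of P₁, and g₀ ⊆ P₀, g₁ ⊆ P₁ filters. Assume (i) g₀ meets every dense subset of P₀; (ii) g₁ meets every dense subset of P₁ that belongs to M; and (iii) for every E ⊆ P₁ with E ∩ g₁ = ∅ of the form E = {p₁ : ∃ p₀ ∈ g₀, (p₀,p₁) ∈ D} for some dense D ⊆ P₀ × P₁, there exists F ∈ M with E ⊆ F and F ∩ g₁ = ∅. Then for every dense D ⊆ P₀ × P₁, the product filter g₀ × g₁ meets D; in other words, there exist p₀ ∈ g₀ and p₁ ∈ g₁ with (p₀, p₁) ∈ D. -/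
/-!
Suppose `g₀ × g₁` missed a dense `D ⊆ P₀ × P₁`. Genericity of `g₀` makes the projection
`E = {p₁ | ∃ p₀ ∈ g₀, (p₀, p₁) ∈ D}` dense: below any `q₁`, the first coordinates of the points
of `D` lying under `q₁` form a dense subset of `P₀`, which `g₀` meets. Separation encloses `E`
in some `F ∈ M` avoiding `g₁`; but `F` is dense as a superset of `E`, so `g₁` meets it.
-/

section

variable {P Q : Type*} [Preorder P] [Preorder Q]

/-- Density in the sense of forcing (not the topological `Dense`). -/
def IsDense (E : Set P) : Prop := ∀ q, ∃ r ∈ E, r ≤ q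

theorem IsDense.mono {E F : Set P} (hEF : E ⊆ F) (hE : IsDense E) : IsDense F := fun q ↦
  let ⟨r, hrE, hrq⟩ := hE q
  ⟨r, hEF hrE, hrq⟩

theorem IsDense.fst_below {D : Set (P × Q)} (hD : IsDense D) (q : Q) :
    IsDense {p | ∃ r ≤ q, (p, r) ∈ D} := fun p ↦
  let ⟨s, hsD, hsp, hsq⟩ := hD (p, q)
  ⟨s.1, ⟨s.2, hsq, hsD⟩, hsp⟩

theorem IsDense.snd_over {D : Set (P × Q)} (hD : IsDense D) {g : Set P}
    (hg : ∀ E, IsDense E → (g ∩ E).Nonempty) :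
    IsDense {r | ∃ p ∈ g, (p, r) ∈ D} := fun q ↦
  let ⟨p, hpg, r, hrq, hprD⟩ := hg _ (hD.fst_below q)
  ⟨r, ⟨p, hpg, hprD⟩, hrq⟩

end

theorem product_genericity_general {P₀ P₁ : Type*} [PartialOrder P₀] [PartialOrder P₁]
    (M : Set (Set P₁)) (g₀ : Set P₀) (g₁ : Set P₁)
    -- (i) g₀ meets every dense subset of P₀
    (hgen₀ : ∀ E : Set P₀, (∀ q, ∃ r ∈ E, r ≤ q) → (g₀ ∩ E).Nonempty)
    -- (ii) g₁ meets every dense subset of P₁ belonging to M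
    (hgen₁ : ∀ E ∈ M, (∀ q : P₁, ∃ r ∈ E, r ≤ q) → (g₁ ∩ E).Nonempty)
    -- (iii) separation: projections of dense sets avoided by g₁ can be enlarged
    -- to sets in M avoided by g₁
    (hsep : ∀ D : Set (P₀ × P₁),
      (∀ q : P₀ × P₁, ∃ r ∈ D, r.1 ≤ q.1 ∧ r.2 ≤ q.2) →
      {p₁ | ∃ p₀ ∈ g₀, (p₀, p₁) ∈ D} ∩ g₁ = ∅ →
      ∃ F ∈ M, {p₁ | ∃ p₀ ∈ g₀, (p₀, p₁) ∈ D} ⊆ F ∧ F ∩ g₁ = ∅) :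
    -- conclusion: g₀ × g₁ meets every dense subset of P₀ × P₁
    ∀ D : Set (P₀ × P₁),
      (∀ q : P₀ × P₁, ∃ r ∈ D, r.1 ≤ q.1 ∧ r.2 ≤ q.2) →
      ∃ p₀ ∈ g₀, ∃ p₁ ∈ g₁, (p₀, p₁) ∈ D := by
  intro D hD
  by_contra! hmiss
  have hE : {p₁ | ∃ p₀ ∈ g₀, (p₀, p₁) ∈ D} ∩ g₁ = ∅ :=
    Set.eq_empty_of_forall_notMem fun p₁ ⟨⟨p₀, hp₀, hpD⟩, hp₁⟩ ↦ hmiss p₀ hp₀ p₁ hp₁ hpD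
  obtain ⟨F, hFM, hEF, hFg⟩ := hsep D hD hE
  have hF : IsDense F := (IsDense.snd_over (D := D) hD hgen₀).mono hEF
  obtain ⟨p₁, hp₁g, hp₁F⟩ := hgen₁ F hFM hF
  exact hFg.subset ⟨hp₁F, hp₁g⟩

/-- product genericity from separation. -/
theorem product_genericity {P₀ P₁ : Type*} [PartialOrder P₀] [PartialOrder P₁]
    (M : Set (Set P₁)) (g₀ : Set P₀) (g₁ : Set P₁)
    -- g₀ and g₁ are filters
    (hne₀ : g₀.Nonempty)
    (hup₀ : ∀ p q, p ∈ g₀ → p ≤ q → q ∈ g₀)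
    (hdir₀ : ∀ p q, p ∈ g₀ → q ∈ g₀ → ∃ r ∈ g₀, r ≤ p ∧ r ≤ q)
    (hne₁ : g₁.Nonempty)
    (hup₁ : ∀ p q, p ∈ g₁ → p ≤ q → q ∈ g₁)
    (hdir₁ : ∀ p q, p ∈ g₁ → q ∈ g₁ → ∃ r ∈ g₁, r ≤ p ∧ r ≤ q)
    -- (i) g₀ meets every dense subset of P₀
    (hgen₀ : ∀ E : Set P₀, (∀ q, ∃ r ∈ E, r ≤ q) → (g₀ ∩ E).Nonempty)
    -- (ii) g₁ meets every dense subset of P₁ belonging to M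
    (hgen₁ : ∀ E ∈ M, (∀ q : P₁, ∃ r ∈ E, r ≤ q) → (g₁ ∩ E).Nonempty)
    -- (iii) separation: projections of dense sets avoided by g₁ can be enlarged
    -- to sets in M avoided by g₁
    (hsep : ∀ D : Set (P₀ × P₁),
      (∀ q : P₀ × P₁, ∃ r ∈ D, r.1 ≤ q.1 ∧ r.2 ≤ q.2) →
      {p₁ | ∃ p₀ ∈ g₀, (p₀, p₁) ∈ D} ∩ g₁ = ∅ →
      ∃ F ∈ M, {p₁ | ∃ p₀ ∈ g₀, (p₀, p₁) ∈ D} ⊆ F ∧ F ∩ g₁ = ∅) :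
    -- conclusion: g₀ × g₁ meets every dense subset of P₀ × P₁
    ∀ D : Set (P₀ × P₁),
      (∀ q : P₀ × P₁, ∃ r ∈ D, r.1 ≤ q.1 ∧ r.2 ≤ q.2) →
      ∃ p₀ ∈ g₀, ∃ p₁ ∈ g₁, (p₀, p₁) ∈ D :=
  product_genericity_general M g₀ g₁ hgen₀ hgen₁ hsep
end

section
/- Compression of well-founded tree codes: fix a countable ordinal bound. For every ordinal α and every 'α-code' ⟨T, f⟩ — where T is a well-founded tree (of arbitrary cardinality, but well-orderable) of rank α with a single root, and f assigns to each terminal node of T a finite sequence of natural numbers — there exists an α-code ⟨S, g⟩ with |S| ≤ ℶ_{α+1} such that eval(S, g) = eval(T, f) as subsets of Baire space ℕ^ℕ. -/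
/-- A tree of finite sequences: contains the root `[]` and is closed under
initial segments. -/
def IsSeqTree {A : Type} (T : Set (List A)) : Prop :=
  [] ∈ T ∧ ∀ t ∈ T, ∀ s : List A, s <+: t → s ∈ T

/-- The relation "is a proper extension, within the tree `T`"; well-foundedness of
this relation expresses well-foundedness of the tree (no infinite branches). -/
def extRel {A : Type} (T : Set (List A)) (s t : List A) : Prop :=
  s ∈ T ∧ t ∈ T ∧ t <+: s ∧ t ≠ s

/-- `ev` is the evaluation of the code `⟨T, f⟩` into subsets of Baire space:
at a terminal node `t`, `ev t` is the set of `z ∈ ℕ^ℕ` with `f t` an initial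
segment of `z`; at a non-terminal node `t`, `ev t` is the intersection of the
complements of the evaluations at the immediate successors of `t`. -/
def IsEval {A : Type} (T : Set (List A)) (f : List A → List ℕ)
    (ev : List A → Set (ℕ → ℕ)) : Prop :=
  ∀ t ∈ T,
    ((∀ a : A, t ++ [a] ∉ T) →
      ev t = {z : ℕ → ℕ | ∀ i : ℕ, ∀ h : i < (f t).length, z i = (f t).get ⟨i, h⟩}) ∧
    ((∃ a : A, t ++ [a] ∈ T) →
      ev t = ⋂ a ∈ {a : A | t ++ [a] ∈ T}, (Set.univ \ ev (t ++ [a])))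

set_option linter.deprecated false

noncomputable def WellFounded.rank {α : Type*} {r : α → α → Prop} (hwf : WellFounded r) (a : α) :
    Ordinal := (hwf.apply a).rank

theorem WellFounded.rank_eq {α : Type*} {r : α → α → Prop} (hwf : WellFounded r) (a : α) :
    hwf.rank a = ⨆ b : { b // r b a }, Order.succ (hwf.rank b) :=
  Acc.rank_eq _

theorem WellFounded.rank_lt_of_rel {α : Type*} {r : α → α → Prop} (hwf : WellFounded r) {a b : α}
    (h : r a b) : hwf.rank a < hwf.rank b :=
  Acc.rank_lt_of_rel _ h

namespace CC
open Classical

variable {A : Type} (T : Set (List A)) (f : List A → List ℕ)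

def Term (t : List A) : Prop := ∀ a : A, t ++ [a] ∉ T

theorem extRel_child {t : List A} (ht : t ∈ T) {a : A} (h : t ++ [a] ∈ T) :
    extRel T (t ++ [a]) t :=
  ⟨h, ht, List.prefix_append _ _, by simp⟩

variable (hwf : WellFounded (extRel T))

def Rbody (t : List A) (IH : ∀ y, extRel T y t → List A → Prop) (t' : List A) : Prop :=
  ∀ (ht : t ∈ T), t' ∈ T →
    ((Term T t ∧ Term T t' ∧ f t = f t') ∨
     (¬ Term T t ∧ ¬ Term T t' ∧
       (∀ a, ∀ h : t ++ [a] ∈ T, ∃ a', (t' ++ [a'] ∈ T) ∧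
          IH (t ++ [a]) (extRel_child T ht h) (t' ++ [a'])) ∧
       (∀ a', (t' ++ [a'] ∈ T) → ∃ a, ∃ h : t ++ [a] ∈ T,
          IH (t ++ [a]) (extRel_child T ht h) (t' ++ [a']))))

def R : List A → List A → Prop :=
  hwf.fix (C := fun _ => List A → Prop) (Rbody T f)

theorem R_iff (t t' : List A) :
    R T f hwf t t' ↔ Rbody T f t (fun y _ => R T f hwf y) t' :=
  Iff.of_eq (congrFun (hwf.fix_eq (Rbody T f) t) t')

/-- elimination -/
theorem R_elim {t t' : List A} (h : R T f hwf t t') (ht : t ∈ T) (ht' : t' ∈ T) :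
    (Term T t ∧ Term T t' ∧ f t = f t') ∨
     (¬ Term T t ∧ ¬ Term T t' ∧
       (∀ a, (t ++ [a] ∈ T) → ∃ a', (t' ++ [a'] ∈ T) ∧
          R T f hwf (t ++ [a]) (t' ++ [a'])) ∧
       (∀ a', (t' ++ [a'] ∈ T) → ∃ a, (t ++ [a] ∈ T) ∧
          R T f hwf (t ++ [a]) (t' ++ [a']))) := by
  have h2 := (R_iff T f hwf t t').1 h ht ht'
  rcases h2 with h2 | ⟨h1, h2, h3, h4⟩
  · exact Or.inl h2
  · refine Or.inr ⟨h1, h2, fun a ha => ?_, fun a' ha' => ?_⟩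
    · obtain ⟨a', ha', hr⟩ := h3 a ha; exact ⟨a', ha', hr⟩
    · obtain ⟨a, ha, hr⟩ := h4 a' ha'; exact ⟨a, ha, hr⟩

theorem R_intro {t t' : List A}
    (h : (Term T t ∧ Term T t' ∧ f t = f t') ∨
     (¬ Term T t ∧ ¬ Term T t' ∧
       (∀ a, (t ++ [a] ∈ T) → ∃ a', (t' ++ [a'] ∈ T) ∧
          R T f hwf (t ++ [a]) (t' ++ [a'])) ∧
       (∀ a', (t' ++ [a'] ∈ T) → ∃ a, (t ++ [a] ∈ T) ∧
          R T f hwf (t ++ [a]) (t' ++ [a'])))) :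
    R T f hwf t t' := by
  refine (R_iff T f hwf t t').2 ?_
  intro ht ht'
  rcases h with h | ⟨h1, h2, h3, h4⟩
  · exact Or.inl h
  · refine Or.inr ⟨h1, h2, fun a ha => ?_, fun a' ha' => ?_⟩
    · obtain ⟨a', ha', hr⟩ := h3 a ha; exact ⟨a', ha', hr⟩
    · obtain ⟨a, ha, hr⟩ := h4 a' ha'; exact ⟨a, ha, hr⟩

theorem R_refl : ∀ t, t ∈ T → R T f hwf t t := by
  intro t
  induction t using hwf.induction with
  | _ t IH =>
    intro ht
    refine R_intro T f hwf ?_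
    by_cases hterm : Term T t
    · exact Or.inl ⟨hterm, hterm, rfl⟩
    · refine Or.inr ⟨hterm, hterm, fun a ha => ⟨a, ha, IH _ (extRel_child T ht ha) ha⟩,
        fun a ha => ⟨a, ha, IH _ (extRel_child T ht ha) ha⟩⟩

theorem R_symm : ∀ t, t ∈ T → ∀ t', t' ∈ T → R T f hwf t t' → R T f hwf t' t := by
  intro t
  induction t using hwf.induction with
  | _ t IH =>
    intro ht t' ht' h
    refine R_intro T f hwf ?_
    rcases R_elim T f hwf h ht ht' with ⟨h1, h2, h3⟩ | ⟨h1, h2, h3, h4⟩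
    · exact Or.inl ⟨h2, h1, h3.symm⟩
    · refine Or.inr ⟨h2, h1, fun a' ha' => ?_, fun a ha => ?_⟩
      · obtain ⟨a, ha, hr⟩ := h4 a' ha'
        exact ⟨a, ha, IH _ (extRel_child T ht ha) ha _ ha' hr⟩
      · obtain ⟨a', ha', hr⟩ := h3 a ha
        exact ⟨a', ha', IH _ (extRel_child T ht ha) ha _ ha' hr⟩

theorem R_trans : ∀ t₁, t₁ ∈ T → ∀ t₂, t₂ ∈ T → ∀ t₃, t₃ ∈ T →
    R T f hwf t₁ t₂ → R T f hwf t₂ t₃ → R T f hwf t₁ t₃ := by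
  intro t₁
  induction t₁ using hwf.induction with
  | _ t₁ IH =>
    intro h₁ t₂ h₂ t₃ h₃ r12 r23
    refine R_intro T f hwf ?_
    rcases R_elim T f hwf r12 h₁ h₂ with ⟨k1, k2, k3⟩ | ⟨k1, k2, k3, k4⟩
    · rcases R_elim T f hwf r23 h₂ h₃ with ⟨l1, l2, l3⟩ | ⟨l1, l2, l3, l4⟩
      · exact Or.inl ⟨k1, l2, k3.trans l3⟩
      · exact absurd k2 l1
    · rcases R_elim T f hwf r23 h₂ h₃ with ⟨l1, l2, l3⟩ | ⟨l1, l2, l3, l4⟩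
      · exact absurd l1 k2
      · refine Or.inr ⟨k1, l2, fun a ha => ?_, fun c hc => ?_⟩
        · obtain ⟨b, hb, rab⟩ := k3 a ha
          obtain ⟨c, hc, rbc⟩ := l3 b hb
          exact ⟨c, hc, IH _ (extRel_child T h₁ ha) ha _ hb _ hc rab rbc⟩
        · obtain ⟨b, hb, rbc⟩ := l4 c hc
          obtain ⟨a, ha, rab⟩ := k4 b hb
          exact ⟨a, ha, IH _ (extRel_child T h₁ ha) ha _ hb _ hc rab rbc⟩


def rSet : Setoid (List A) where
  r t t' := (t ∈ T ∧ t' ∈ T ∧ R T f hwf t t') ∨ ((t ∉ T ∨ t' ∉ T) ∧ t = t')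
  iseqv := by
    constructor
    · intro t
      by_cases ht : t ∈ T
      · exact Or.inl ⟨ht, ht, R_refl T f hwf t ht⟩
      · exact Or.inr ⟨Or.inl ht, rfl⟩
    · intro t t' h
      rcases h with ⟨h1, h2, h3⟩ | ⟨h1, h2⟩
      · exact Or.inl ⟨h2, h1, R_symm T f hwf t h1 t' h2 h3⟩
      · exact Or.inr ⟨h1.symm, h2.symm⟩
    · intro t t' t'' h h'
      rcases h with ⟨h1, h2, h3⟩ | ⟨h1, h2⟩
      · rcases h' with ⟨k1, k2, k3⟩ | ⟨k1, k2⟩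
        · exact Or.inl ⟨h1, k2, R_trans T f hwf t h1 t' h2 t'' k2 h3 k3⟩
        · exact k2 ▸ Or.inl ⟨h1, h2, h3⟩
      · subst h2
        exact h'

abbrev QB := Quotient (rSet T f hwf)

def Q (t : List A) : QB T f hwf := Quotient.mk (rSet T f hwf) t

theorem Q_eq_of_R {t t' : List A} (ht : t ∈ T) (ht' : t' ∈ T) (h : R T f hwf t t') :
    Q T f hwf t = Q T f hwf t' :=
  Quotient.sound (Or.inl ⟨ht, ht', h⟩)

theorem R_of_Q_eq {t t' : List A} (ht : t ∈ T) (ht' : t' ∈ T) (h : Q T f hwf t = Q T f hwf t') :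
    R T f hwf t t' := by
  rcases Quotient.exact h with ⟨_, _, h3⟩ | ⟨_, h2⟩
  · exact h3
  · exact h2 ▸ R_refl T f hwf t ht

def F (t : List A) : List (QB T f hwf) :=
  (List.range t.length).map (fun k => Q T f hwf (t.take (k + 1)))

@[simp] theorem F_length (t : List A) : (F T f hwf t).length = t.length := by
  simp [F]

@[simp] theorem F_nil : F T f hwf [] = [] := by simp [F]

theorem F_take (t : List A) (k : ℕ) : (F T f hwf t).take k = F T f hwf (t.take k) := by
  apply List.ext_getElem
  · simp [F]
  · intro i h1 h2
    simp only [F, List.getElem_take, List.getElem_map, List.getElem_range]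
    congr 1
    rw [List.take_take]
    congr 1
    simp [F] at h1 h2
    omega

theorem F_concat (t : List A) (a : A) :
    F T f hwf (t ++ [a]) = F T f hwf t ++ [Q T f hwf (t ++ [a])] := by
  simp only [F, List.length_append, List.length_singleton, List.range_succ, List.map_append,
    List.map_cons, List.map_nil]
  congr 1
  · apply List.map_congr_left
    intro k hk
    simp only [List.mem_range] at hk
    congr 1
    rw [List.take_append_of_le_length (by omega)]
  · congr 2
    rw [List.take_of_length_le (by simp)]

theorem F_getElem (t : List A) (k : ℕ) (h : k < t.length) :
    (F T f hwf t)[k]'(by simpa using h) = Q T f hwf (t.take (k + 1)) := by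
  simp [F]

theorem Q_eq_of_F_eq {t t' : List A} (h : F T f hwf t = F T f hwf t') :
    Q T f hwf t = Q T f hwf t' := by
  have hlen : t.length = t'.length := by
    have := congrArg List.length h
    simpa using this
  rcases Nat.eq_zero_or_pos t.length with h0 | h0
  · have ht : t = [] := List.eq_nil_of_length_eq_zero h0
    have ht' : t' = [] := List.eq_nil_of_length_eq_zero (hlen ▸ h0)
    rw [ht, ht']
  · have hk : t.length - 1 < t.length := by omega
    have hk' : t.length - 1 < t'.length := by omega
    have := List.getElem_of_eq h (i := t.length - 1) (by simpa using hk)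
    rw [F_getElem T f hwf t _ hk] at this
    rw [show ((F T f hwf t')[t.length-1]'(by simpa using hk')) =
      Q T f hwf (t'.take (t.length - 1 + 1)) from F_getElem T f hwf t' _ hk'] at this
    have e1 : t.take (t.length - 1 + 1) = t := by
      rw [List.take_of_length_le (by omega)]
    have e2 : t'.take (t.length - 1 + 1) = t' := by
      rw [List.take_of_length_le (by omega)]
    rw [e1, e2] at this
    exact this

theorem R_of_F_eq {t t' : List A} (ht : t ∈ T) (ht' : t' ∈ T)
    (h : F T f hwf t = F T f hwf t') : R T f hwf t t' :=
  R_of_Q_eq T f hwf ht ht' (Q_eq_of_F_eq T f hwf h)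

set_option linter.deprecated false

theorem exists_child {t u : List A} (h : t <+: u) (hne : t ≠ u) :
    ∃ a, (t ++ [a]) <+: u := by
  obtain ⟨r, rfl⟩ := h
  cases r with
  | nil => simp at hne
  | cons a r' => exact ⟨a, ⟨r', by simp⟩⟩

theorem rank_le_of_prefix {c u : List A} (hc : c ∈ T) (hu : u ∈ T) (h : c <+: u) :
    hwf.rank u ≤ hwf.rank c := by
  rcases eq_or_ne c u with rfl | hne
  · exact le_rfl
  · exact (hwf.rank_lt_of_rel (⟨hu, hc, h, hne⟩ : extRel T u c)).le

theorem rank_le {a : List A} {o : Ordinal}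
    (h : ∀ b, extRel T b a → hwf.rank b < o) : hwf.rank a ≤ o := by
  rw [WellFounded.rank_eq]
  refine Ordinal.iSup_le_iff.2 fun b => ?_
  rw [Order.succ_le_iff]
  exact h b.1 b.2

theorem term_iff_of_R {t t' : List A} (ht : t ∈ T) (ht' : t' ∈ T)
    (h : R T f hwf t t') : Term T t ↔ Term T t' := by
  rcases R_elim T f hwf h ht ht' with ⟨h1, h2, _⟩ | ⟨h1, h2, _⟩
  · exact iff_of_true h1 h2
  · exact iff_of_false h1 h2

theorem rank_le_of_R (hT : IsSeqTree T) : ∀ t, t ∈ T → ∀ t', t' ∈ T → R T f hwf t t' →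
    hwf.rank t ≤ hwf.rank t' := by
  intro t
  induction t using hwf.induction with
  | _ t IH =>
    intro ht t' ht' h
    refine rank_le T hwf fun u hu => ?_
    obtain ⟨huT, -, hpre, hne⟩ := hu
    obtain ⟨a, hpre2⟩ := exists_child (hne := hne) hpre
    have hcT : t ++ [a] ∈ T := hT.2 u huT _ hpre2
    have hnt : ¬ Term T t := fun H => H a hcT
    rcases R_elim T f hwf h ht ht' with ⟨h1, -⟩ | ⟨-, -, h3, -⟩
    · exact absurd h1 hnt
    · obtain ⟨a', ha', hr⟩ := h3 a hcT
      have h5 := IH _ (extRel_child T ht hcT) hcT _ ha' hr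
      have h6 := hwf.rank_lt_of_rel (extRel_child T ht' ha')
      exact lt_of_le_of_lt (le_trans (rank_le_of_prefix T hwf hcT huT hpre2) h5) h6

theorem rank_eq_of_R (hT : IsSeqTree T) {t t' : List A} (ht : t ∈ T) (ht' : t' ∈ T)
    (h : R T f hwf t t') : hwf.rank t = hwf.rank t' :=
  le_antisymm (rank_le_of_R T f hwf hT t ht t' ht' h)
    (rank_le_of_R T f hwf hT t' ht' t ht (R_symm T f hwf t ht t' ht' h))

theorem nonterm_iff {t : List A} : ¬ Term T t ↔ ∃ a, t ++ [a] ∈ T := by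
  simp [Term]

theorem ev_eq_of_R (ev : List A → Set (ℕ → ℕ)) (hev : IsEval T f ev) : ∀ t, t ∈ T → ∀ t', t' ∈ T → R T f hwf t t' →
    ev t = ev t' := by
  intro t
  induction t using hwf.induction with
  | _ t IH =>
    intro ht t' ht' h
    rcases R_elim T f hwf h ht ht' with ⟨h1, h2, h3⟩ | ⟨h1, h2, h3, h4⟩
    · rw [(hev t ht).1 h1, (hev t' ht').1 h2, h3]
    · rw [(hev t ht).2 ((nonterm_iff T).1 h1), (hev t' ht').2 ((nonterm_iff T).1 h2)]
      ext z
      simp only [Set.mem_iInter, Set.mem_diff, Set.mem_univ, true_and, Set.mem_setOf_eq]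
      constructor
      · intro H a' ha'
        obtain ⟨a, ha, hr⟩ := h4 a' ha'
        rw [← IH _ (extRel_child T ht ha) ha _ ha' hr]
        exact H a ha
      · intro H a ha
        obtain ⟨a', ha', hr⟩ := h3 a ha
        rw [IH _ (extRel_child T ht ha) ha _ ha' hr]
        exact H a' ha'

def S : Set (List (QB T f hwf)) := F T f hwf '' T

noncomputable def nodeOf (s : List (QB T f hwf)) : List A :=
  if h : ∃ t, t ∈ T ∧ F T f hwf t = s then h.choose else []

theorem nodeOf_spec {s : List (QB T f hwf)} (hs : s ∈ S T f hwf) :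
    nodeOf T f hwf s ∈ T ∧ F T f hwf (nodeOf T f hwf s) = s := by
  obtain ⟨t, ht, hFt⟩ := hs
  have h : ∃ t, t ∈ T ∧ F T f hwf t = s := ⟨t, ht, hFt⟩
  rw [nodeOf, dif_pos h]
  exact h.choose_spec

theorem prefix_length_lt {t u : List (QB T f hwf)} (h : t <+: u) (hne : t ≠ u) :
    t.length < u.length := by
  rcases lt_or_eq_of_le h.length_le with h1 | h1
  · exact h1
  · exact absurd (h.eq_of_length h1) hne

theorem prefix_length_lt' {t u : List A} (h : t <+: u) (hne : t ≠ u) :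
    t.length < u.length := by
  rcases lt_or_eq_of_le h.length_le with h1 | h1
  · exact h1
  · exact absurd (h.eq_of_length h1) hne

theorem take_mem (hT : IsSeqTree T) {u : List A} (hu : u ∈ T) (k : ℕ) :
    u.take k ∈ T := hT.2 u hu _ (List.take_prefix k u)

theorem take_R (hT : IsSeqTree T) {u t : List A} (hu : u ∈ T) (ht : t ∈ T)
    (h : F T f hwf t <+: F T f hwf u) :
    u.take t.length ∈ T ∧ R T f hwf (u.take t.length) t := by
  have h1 : F T f hwf t = (F T f hwf u).take t.length := by
    have := List.prefix_iff_eq_take.1 h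
    rw [this, F_length]
  rw [F_take] at h1
  exact ⟨take_mem T hT hu _, R_of_F_eq T f hwf (take_mem T hT hu _) ht h1.symm⟩

theorem take_ne {u : List A} {n : ℕ} (h : n < u.length) : u.take n ≠ u := by
  intro he
  have := congrArg List.length he
  simp at this
  omega

theorem wfS (hT : IsSeqTree T) : WellFounded (extRel (S T f hwf)) := by
  have hsub : Subrelation (extRel (S T f hwf))
      (InvImage (· < ·) (fun s => hwf.rank (nodeOf T f hwf s))) := by
    intro s t h
    obtain ⟨hs, ht, hpre, hne⟩ := h
    obtain ⟨hsT, hsF⟩ := nodeOf_spec T f hwf hs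
    obtain ⟨htT, htF⟩ := nodeOf_spec T f hwf ht
    set ts := nodeOf T f hwf s
    set tt := nodeOf T f hwf t
    have hlen_s : ts.length = s.length := by rw [← F_length T f hwf ts, hsF]
    have hlen_t : tt.length = t.length := by rw [← F_length T f hwf tt, htF]
    have hlt : t.length < s.length := prefix_length_lt T f hwf hpre hne
    have hFpre : F T f hwf tt <+: F T f hwf ts := by rw [hsF, htF]; exact hpre
    obtain ⟨hmem, hR⟩ := take_R T f hwf hT hsT htT hFpre
    have h1 : hwf.rank (ts.take tt.length) = hwf.rank tt :=
      rank_eq_of_R T f hwf hT (take_mem T hT hsT _) htT hR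
    have h2 : hwf.rank ts < hwf.rank (ts.take tt.length) :=
      hwf.rank_lt_of_rel ⟨hsT, hmem, List.take_prefix _ _, take_ne (by omega)⟩
    exact lt_of_lt_of_eq h2 h1
  exact Subrelation.wf hsub (InvImage.wf _ Ordinal.lt_wf)

theorem rank_le_gen {α' : Type} {r : α' → α' → Prop} (h : WellFounded r) {a : α'} {o : Ordinal}
    (H : ∀ b, r b a → h.rank b < o) : h.rank a ≤ o := by
  rw [WellFounded.rank_eq]
  exact Ordinal.iSup_le_iff.2 fun b => Order.succ_le_iff.2 (H b.1 b.2)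

theorem F_mem_S {t : List A} (ht : t ∈ T) : F T f hwf t ∈ S T f hwf := ⟨t, ht, rfl⟩

theorem F_prefix {t u : List A} (h : t <+: u) : F T f hwf t <+: F T f hwf u := by
  have h1 : t = u.take t.length := List.prefix_iff_eq_take.1 h
  rw [h1, ← F_take]
  exact List.take_prefix _ _

theorem F_ne {t u : List A} (h : t.length ≠ u.length) : F T f hwf t ≠ F T f hwf u := by
  intro he
  have := congrArg List.length he
  simp at this
  exact h this

theorem rank_ge (hT : IsSeqTree T) : ∀ t, t ∈ T →
    hwf.rank t ≤ (wfS T f hwf hT).rank (F T f hwf t) := by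
  intro t
  induction t using hwf.induction with
  | _ t IH =>
    intro ht
    refine rank_le_gen hwf fun b hb => ?_
    have hbT := hb.1
    have hpre := hb.2.2.1
    have hne := hb.2.2.2
    have h1 := IH b hb hbT
    have h2 : (wfS T f hwf hT).rank (F T f hwf b) < (wfS T f hwf hT).rank (F T f hwf t) :=
      (wfS T f hwf hT).rank_lt_of_rel
        ⟨F_mem_S T f hwf hbT, F_mem_S T f hwf ht, F_prefix T f hwf hpre,
         F_ne T f hwf (Nat.ne_of_lt (prefix_length_lt' hpre hne))⟩
    exact lt_of_le_of_lt h1 h2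

theorem rank_le_S (hT : IsSeqTree T) : ∀ β : Ordinal, ∀ t, t ∈ T → hwf.rank t = β →
    (wfS T f hwf hT).rank (F T f hwf t) ≤ β := by
  intro β
  induction β using Ordinal.induction with
  | h β IH =>
    intro t ht hβ
    refine rank_le_gen (wfS T f hwf hT) fun s' hs' => ?_
    obtain ⟨hs'S, -, hpre, hne⟩ := hs'
    obtain ⟨hu, hFu⟩ := nodeOf_spec T f hwf hs'S
    set u := nodeOf T f hwf s'
    have hlen_u : u.length = s'.length := by rw [← F_length T f hwf u, hFu]
    have hlen_t : t.length < u.length := by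
      have h1 : (F T f hwf t).length < s'.length :=
        prefix_length_lt T f hwf hpre hne
      rw [F_length] at h1; omega
    obtain ⟨hmem, hR⟩ := take_R T f hwf hT hu ht (by rw [hFu]; exact hpre)
    have h1 : hwf.rank (u.take t.length) = β := by
      rw [← hβ]; exact rank_eq_of_R T f hwf hT hmem ht hR
    have h2 : hwf.rank u < β := by
      rw [← h1]
      exact hwf.rank_lt_of_rel ⟨hu, hmem, List.take_prefix _ _, take_ne hlen_t⟩
    have h3 := IH _ h2 u hu rfl
    rw [hFu] at h3
    exact lt_of_le_of_lt h3 h2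

theorem rank_root (hT : IsSeqTree T) {α : Ordinal} (hrank : hwf.rank ([] : List A) = α) :
    (wfS T f hwf hT).rank ([] : List (QB T f hwf)) = α := by
  have h1 := rank_le_S T f hwf hT α [] hT.1 hrank
  have h2 := rank_ge T f hwf hT [] hT.1
  rw [F_nil] at h1 h2
  rw [hrank] at h2
  exact le_antisymm h1 h2

theorem seqTreeS (hT : IsSeqTree T) : IsSeqTree (S T f hwf) := by
  constructor
  · exact ⟨[], hT.1, F_nil T f hwf⟩
  · rintro s ⟨t, ht, rfl⟩ s' hpre
    have h1 : s' = (F T f hwf t).take s'.length := List.prefix_iff_eq_take.1 hpre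
    rw [F_take] at h1
    exact ⟨t.take s'.length, take_mem T hT ht _, h1.symm⟩

noncomputable def gS (s : List (QB T f hwf)) : List ℕ := f (nodeOf T f hwf s)

noncomputable def evS (ev : List A → Set (ℕ → ℕ)) (s : List (QB T f hwf)) : Set (ℕ → ℕ) :=
  ev (nodeOf T f hwf s)

theorem nodeOf_nil (hT : IsSeqTree T) : nodeOf T f hwf ([] : List (QB T f hwf)) = [] := by
  obtain ⟨h1, h2⟩ := nodeOf_spec T f hwf (⟨[], hT.1, F_nil T f hwf⟩ : [] ∈ S T f hwf)
  have := congrArg List.length h2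
  simpa using this

theorem evS_nil (hT : IsSeqTree T) (ev : List A → Set (ℕ → ℕ)) :
    evS T f hwf ev ([] : List (QB T f hwf)) = ev [] := by
  rw [evS, nodeOf_nil T f hwf hT]

theorem isEvalS (hT : IsSeqTree T) (ev : List A → Set (ℕ → ℕ)) (hev : IsEval T f ev) :
    IsEval (S T f hwf) (gS T f hwf) (evS T f hwf ev) := by
  intro s hs
  obtain ⟨ht₀, hF⟩ := nodeOf_spec T f hwf hs
  set t₀ := nodeOf T f hwf s with ht₀def
  have hlen₀ : t₀.length = s.length := by rw [← F_length T f hwf t₀, hF]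
  constructor
  · -- terminal case
    intro hterm
    have ht₀term : ∀ a : A, t₀ ++ [a] ∉ T := by
      intro a ha
      refine hterm (Q T f hwf (t₀ ++ [a])) ?_
      have : F T f hwf (t₀ ++ [a]) = s ++ [Q T f hwf (t₀ ++ [a])] := by
        rw [F_concat, hF]
      exact this ▸ F_mem_S T f hwf ha
    exact (hev t₀ ht₀).1 ht₀term
  · -- nonterminal case
    rintro ⟨b, hb⟩
    -- t₀ is nonterminal
    have key : ∀ b', s ++ [b'] ∈ S T f hwf →
        ∃ a', (t₀ ++ [a'] ∈ T) ∧ evS T f hwf ev (s ++ [b']) = ev (t₀ ++ [a']) := by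
      intro b' hb'
      obtain ⟨u, hu, hFu⟩ := hb'
      have hlen_u : u.length = s.length + 1 := by
        have := congrArg List.length hFu
        simp at this
        exact this
      have hpre : F T f hwf t₀ <+: F T f hwf u := by
        rw [hF, hFu]; exact ⟨[b'], rfl⟩
      obtain ⟨hmem, hR⟩ := take_R T f hwf hT hu ht₀ hpre
      obtain ⟨a, hpre2⟩ := exists_child (List.take_prefix t₀.length u) (take_ne (by omega))
      have hcT : u.take t₀.length ++ [a] ∈ T := hT.2 u hu _ hpre2
      have hu_eq : u.take t₀.length ++ [a] = u :=
        hpre2.eq_of_length (by simp; omega)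
      rcases R_elim T f hwf hR hmem ht₀ with ⟨p1, -⟩ | ⟨-, -, c3, -⟩
      · exact absurd hcT (p1 a)
      · obtain ⟨a', ha', hr⟩ := c3 a hcT
        refine ⟨a', ha', ?_⟩
        have e1 : ev (u.take t₀.length ++ [a]) = ev (t₀ ++ [a']) :=
          ev_eq_of_R T f hwf ev hev _ hcT _ ha' hr
        obtain ⟨hn, hFn⟩ := nodeOf_spec T f hwf (⟨u, hu, hFu⟩ : s ++ [b'] ∈ S T f hwf)
        have e2 : ev (nodeOf T f hwf (s ++ [b'])) = ev u :=
          ev_eq_of_R T f hwf ev hev _ hn _ hu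
            (R_of_F_eq T f hwf hn hu (hFn.trans hFu.symm))
        rw [evS, e2, ← hu_eq, e1]
    have hnt : ∃ a, t₀ ++ [a] ∈ T := by
      obtain ⟨a', ha', -⟩ := key b hb
      exact ⟨a', ha'⟩
    have e1 := (hev t₀ ht₀).2 hnt
    show ev t₀ = _
    rw [e1]
    ext z
    simp only [Set.mem_iInter, Set.mem_diff, Set.mem_univ, true_and, Set.mem_setOf_eq]
    constructor
    · intro H b' hb'
      obtain ⟨a', ha', he⟩ := key b' hb'
      rw [he]
      exact H a' ha'
    · intro H a ha
      have hmem : s ++ [Q T f hwf (t₀ ++ [a])] ∈ S T f hwf := by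
        have : F T f hwf (t₀ ++ [a]) = s ++ [Q T f hwf (t₀ ++ [a])] := by
          rw [F_concat, hF]
        exact this ▸ F_mem_S T f hwf ha
      have h2 := H _ hmem
      obtain ⟨hn, hFn⟩ := nodeOf_spec T f hwf hmem
      have e2 : ev (nodeOf T f hwf (s ++ [Q T f hwf (t₀ ++ [a])])) = ev (t₀ ++ [a]) := by
        refine ev_eq_of_R T f hwf ev hev _ hn _ ha (R_of_F_eq T f hwf hn ha ?_)
        rw [hFn, F_concat, hF]
      rw [evS, e2] at h2
      exact h2

theorem mk_listnat : Cardinal.mk (List ℕ) = Cardinal.aleph0 := Cardinal.mk_list_eq_aleph0 ℕ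

def Dset (β : Ordinal) : Set (QB T f hwf) :=
  {b | ∃ u, u ∈ T ∧ hwf.rank u < β ∧ Q T f hwf u = b}

def Eset (γ : Ordinal) : Set (QB T f hwf) :=
  {b | ∃ u, u ∈ T ∧ hwf.rank u = γ ∧ Q T f hwf u = b}

open Classical in
theorem mk_Eset_le (γ : Ordinal) :
    Cardinal.mk (Eset T f hwf γ) ≤
      Cardinal.aleph0 + 2 ^ Cardinal.mk (Dset T f hwf γ) := by
  have hinj : ∃ j : Eset T f hwf γ → (List ℕ) ⊕ (Set (Dset T f hwf γ)),
      Function.Injective j := by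
    refine ⟨fun b => if Term T b.2.choose then Sum.inl (f b.2.choose)
      else Sum.inr {d | ∃ a, ∃ _ : b.2.choose ++ [a] ∈ T,
        Q T f hwf (b.2.choose ++ [a]) = d.1}, ?_⟩
    intro b₁ b₂ hj
    obtain ⟨hu₁, hr₁, hq₁⟩ := b₁.2.choose_spec
    obtain ⟨hu₂, hr₂, hq₂⟩ := b₂.2.choose_spec
    set u₁ := b₁.2.choose with hu₁def
    set u₂ := b₂.2.choose with hu₂def
    have hchild : ∀ {u : List A} {a : A}, u ∈ T → hwf.rank u = γ → u ++ [a] ∈ T →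
        Q T f hwf (u ++ [a]) ∈ Dset T f hwf γ := by
      intro u a hu hr ha
      exact ⟨u ++ [a], ha, hr ▸ hwf.rank_lt_of_rel (extRel_child T hu ha), rfl⟩
    dsimp only at hj
    rw [← hu₁def, ← hu₂def] at hj
    have hR : R T f hwf u₁ u₂ := by
      by_cases h1 : Term T u₁ <;> by_cases h2 : Term T u₂
      · rw [if_pos h1, if_pos h2] at hj
        exact R_intro T f hwf (Or.inl ⟨h1, h2, Sum.inl.inj hj⟩)
      · rw [if_pos h1, if_neg h2] at hj; simp at hj
      · rw [if_neg h1, if_pos h2] at hj; simp at hj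
      · rw [if_neg h1, if_neg h2] at hj
        have hE := Sum.inr.inj hj
        refine R_intro T f hwf (Or.inr ⟨h1, h2, ?_, ?_⟩)
        · intro a ha
          have hd : (⟨Q T f hwf (u₁ ++ [a]), hchild hu₁ hr₁ ha⟩ : Dset T f hwf γ) ∈
              {d : Dset T f hwf γ | ∃ a', ∃ _ : u₁ ++ [a'] ∈ T,
                Q T f hwf (u₁ ++ [a']) = d.1} := ⟨a, ha, rfl⟩
          rw [hE] at hd
          obtain ⟨a', ha', hQ⟩ := hd
          exact ⟨a', ha', R_of_Q_eq T f hwf ha ha' hQ.symm⟩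
        · intro a' ha'
          have hd : (⟨Q T f hwf (u₂ ++ [a']), hchild hu₂ hr₂ ha'⟩ : Dset T f hwf γ) ∈
              {d : Dset T f hwf γ | ∃ a, ∃ _ : u₂ ++ [a] ∈ T,
                Q T f hwf (u₂ ++ [a]) = d.1} := ⟨a', ha', rfl⟩
          rw [← hE] at hd
          obtain ⟨a, ha, hQ⟩ := hd
          exact ⟨a, ha, R_of_Q_eq T f hwf ha ha' hQ⟩
    apply Subtype.ext
    rw [← hq₁, ← hq₂]
    exact Q_eq_of_R T f hwf hu₁ hu₂ hR
  obtain ⟨j, hj⟩ := hinj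
  calc Cardinal.mk (Eset T f hwf γ)
      ≤ Cardinal.mk ((List ℕ) ⊕ (Set (Dset T f hwf γ))) := Cardinal.mk_le_of_injective hj
    _ = Cardinal.aleph0 + 2 ^ Cardinal.mk (Dset T f hwf γ) := by
        rw [Cardinal.mk_sum, Cardinal.mk_set, mk_listnat, Cardinal.lift_id, Cardinal.lift_id]

theorem mk_Dset_le {α : Ordinal} (hα : α.card ≤ Cardinal.aleph0) :
    ∀ β : Ordinal, β ≤ α → Cardinal.mk (Dset T f hwf β) ≤ Cardinal.beth β := by
  intro β
  induction β using Ordinal.induction with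
  | h β IH =>
    intro hβα
    rcases eq_or_ne β 0 with rfl | hβ0
    · have hempty : Dset T f hwf 0 = ∅ := by
        ext b
        simp only [Dset, Set.mem_setOf_eq, Set.mem_empty_iff_false, iff_false]
        rintro ⟨u, -, hlt, -⟩
        exact absurd hlt (by simp)
      rw [hempty, Cardinal.mk_emptyCollection]
      exact zero_le
    · have hcard : β.card ≤ Cardinal.aleph0 := le_trans (Ordinal.card_le_card hβα) hα
      have hcnt : Countable (Set.Iio β) := by
        rw [← Cardinal.mk_le_aleph0_iff, Ordinal.mk_Iio_ordinal]
        exact le_trans (Cardinal.lift_le.2 hcard) (by simp)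
      have hne : Nonempty (Set.Iio β) := ⟨⟨0, pos_iff_ne_zero.2 hβ0⟩⟩
      obtain ⟨φ, hφ⟩ := exists_surjective_nat (Set.Iio β)
      have hsub : Dset T f hwf β ⊆ ⋃ n : ℕ, Eset T f hwf ((φ n : Ordinal)) := by
        rintro b ⟨u, hu, hlt, hq⟩
        obtain ⟨n, hn⟩ := hφ ⟨hwf.rank u, hlt⟩
        refine Set.mem_iUnion.2 ⟨n, u, hu, ?_, hq⟩
        rw [hn]
      have hbound : ∀ n : ℕ, Cardinal.mk (Eset T f hwf ((φ n : Ordinal))) ≤ Cardinal.beth β := by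
        intro n
        have hγ : (φ n : Ordinal) < β := (φ n).2
        have hγα : (φ n : Ordinal) ≤ α := le_of_lt (lt_of_lt_of_le hγ hβα)
        calc Cardinal.mk (Eset T f hwf ((φ n : Ordinal)))
            ≤ Cardinal.aleph0 + 2 ^ Cardinal.mk (Dset T f hwf ((φ n : Ordinal))) :=
              mk_Eset_le T f hwf _
          _ ≤ Cardinal.aleph0 + 2 ^ Cardinal.beth ((φ n : Ordinal)) :=
              add_le_add_right (Cardinal.power_le_power_left two_ne_zero (IH _ hγ hγα)) _
          _ = Cardinal.aleph0 + Cardinal.beth (Order.succ ((φ n : Ordinal))) := by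
              rw [Cardinal.beth_succ]
          _ = Cardinal.beth (Order.succ ((φ n : Ordinal))) :=
              Cardinal.add_eq_right (Cardinal.aleph0_le_beth _) (Cardinal.aleph0_le_beth _)
          _ ≤ Cardinal.beth β := Cardinal.beth_mono (Order.succ_le_iff.2 hγ)
      calc Cardinal.mk (Dset T f hwf β)
          ≤ Cardinal.mk (⋃ n : ℕ, Eset T f hwf ((φ n : Ordinal))) :=
            Cardinal.mk_le_mk_of_subset hsub
        _ ≤ Cardinal.mk ℕ * ⨆ n : ℕ, Cardinal.mk (Eset T f hwf ((φ n : Ordinal))) :=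
            Cardinal.mk_iUnion_le _
        _ ≤ Cardinal.aleph0 * Cardinal.beth β := by
            refine mul_le_mul' (by simp) (ciSup_le' hbound)
        _ ≤ Cardinal.beth β * Cardinal.beth β :=
            mul_le_mul_left (Cardinal.aleph0_le_beth β) _
        _ = Cardinal.beth β := Cardinal.mul_eq_self (Cardinal.aleph0_le_beth β)

theorem mem_Dset_of_mem_S (hT : IsSeqTree T) {α : Ordinal}
    (hrank : hwf.rank ([] : List A) = α)
    {s : List (QB T f hwf)} (hs : s ∈ S T f hwf) :
    ∀ b ∈ s, b ∈ Dset T f hwf α := by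
  obtain ⟨t, ht, rfl⟩ := hs
  intro b hb
  rw [F] at hb
  simp only [List.mem_map, List.mem_range] at hb
  obtain ⟨k, hk, rfl⟩ := hb
  have hmem : t.take (k + 1) ∈ T := take_mem T hT ht _
  have hne : ([] : List A) ≠ t.take (k + 1) := by
    intro he
    have := congrArg List.length he
    simp at this
    omega
  refine ⟨t.take (k + 1), hmem, ?_, rfl⟩
  rw [← hrank]
  exact hwf.rank_lt_of_rel ⟨hmem, hT.1, List.nil_prefix, hne⟩

theorem mk_S_le (hT : IsSeqTree T) {α : Ordinal} (hα : α.card ≤ Cardinal.aleph0)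
    (hrank : hwf.rank ([] : List A) = α) :
    Cardinal.mk (S T f hwf) ≤ Cardinal.beth (α + 1) := by
  have hinj : Function.Injective (fun x : S T f hwf =>
      (x.1.pmap (fun b hb => (⟨b, hb⟩ : Dset T f hwf α))
        (mem_Dset_of_mem_S T f hwf hT hrank x.2) : List (Dset T f hwf α))) := by
    intro x y h
    apply Subtype.ext
    have := congrArg (List.map (Subtype.val)) h
    simpa [List.map_pmap] using this
  calc Cardinal.mk (S T f hwf)
      ≤ Cardinal.mk (List (Dset T f hwf α)) := Cardinal.mk_le_of_injective hinj
    _ ≤ max Cardinal.aleph0 (Cardinal.mk (Dset T f hwf α)) := Cardinal.mk_list_le_max _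
    _ ≤ max Cardinal.aleph0 (Cardinal.beth α) := by
        exact max_le_max le_rfl (mk_Dset_le T f hwf hα α le_rfl)
    _ = Cardinal.beth α := max_eq_right (Cardinal.aleph0_le_beth α)
    _ ≤ Cardinal.beth (α + 1) := Cardinal.beth_mono (by rw [Ordinal.add_one_eq_succ]; exact Order.le_succ α)

end CC

set_option linter.deprecated false in
/-- compression of well-founded tree codes. Fix a countable ordinal
`α`. For every `α`-code `⟨T, f⟩` — a well-founded tree `T` of rank `α` with a
single root and `f` assigning finite sequences of naturals to terminal nodes —
there is an `α`-code `⟨S, g⟩` of cardinality at most `ℶ_{α+1}` with the same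
evaluation. -/
theorem code_compression (α : Ordinal.{0}) (hα : α.card ≤ Cardinal.aleph0)
    (A : Type) (T : Set (List A)) (f : List A → List ℕ)
    (hT : IsSeqTree T) (hwf : WellFounded (extRel T))
    (hrank : (hwf.apply ([] : List A)).rank = α)
    (ev : List A → Set (ℕ → ℕ)) (hev : IsEval T f ev) :
    ∃ (B : Type) (S : Set (List B)) (g : List B → List ℕ)
      (hS : IsSeqTree S) (hwfS : WellFounded (extRel S))
      (evS : List B → Set (ℕ → ℕ)),
      (hwfS.apply ([] : List B)).rank = α ∧
      Cardinal.mk S ≤ Cardinal.beth (α + 1) ∧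
      IsEval S g evS ∧
      evS [] = ev [] := by
  exact ⟨CC.QB T f hwf, CC.S T f hwf, CC.gS T f hwf, CC.seqTreeS T f hwf hT,
    CC.wfS T f hwf hT, CC.evS T f hwf ev,
    CC.rank_root T f hwf hT hrank,
    CC.mk_S_le T f hwf hT hα hrank,
    CC.isEvalS T f hwf hT ev hev,
    CC.evS_nil T f hwf hT ev⟩
end

section
/- From a perfect independent set to a perfect set of pairwise inequivalent elements: let E be an equivalence relation on Cantor space 2^ℕ, let x be a parameter such that E ∈ 𝔇(x), and let C ⊆ 2^ℕ be a set of elements pairwise independent over x such that no element of C has its E-class in 𝔇(x) (identifying each point z ∈ 2^ℕ with an element of Ω via its neighborhood filter). Then C consists of pairwise E-inequivalent elements. -/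
theorem perfect_set_inequivalent_general {Ω : Type*}
    (𝔇 : Ω → Set (Set Ω)) (pair : Ω → Ω → Ω)
    (indep : Ω → Ω → Ω → Prop)
    -- coding of points of Cantor space as elements of Ω (via neighborhood filters)
    (code : (ℕ → Bool) → Ω)
    (E : (ℕ → Bool) → (ℕ → Bool) → Prop)
    (hE : Equivalence E)
    (x : Ω)
    -- the intersection consequence: a set definable both from (x,y₀) and from
    -- (x,y₁) with y₀ ⫫[x] y₁ is definable from x
    (hinter : ∀ y₀ y₁, indep x y₀ y₁ →
      ∀ A : Set Ω, A ∈ 𝔇 (pair x y₀) → A ∈ 𝔇 (pair x y₁) → A ∈ 𝔇 x)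
    -- each E-class is definable from x together with any of its members
    (hclass : ∀ z : ℕ → Bool, code '' {w | E z w} ∈ 𝔇 (pair x (code z)))
    (C : Set (ℕ → Bool))
    -- C consists of elements pairwise independent over x
    (hCindep : ∀ z₀ ∈ C, ∀ z₁ ∈ C, z₀ ≠ z₁ → indep x (code z₀) (code z₁))
    -- no element of C has its E-class definable from x
    (hCclass : ∀ z ∈ C, code '' {w | E z w} ∉ 𝔇 x) :
    ∀ z₀ ∈ C, ∀ z₁ ∈ C, z₀ ≠ z₁ → ¬ E z₀ z₁ := by
  intro z₀ hz₀ z₁ hz₁ hne hEz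
  have hclass_eq : {w | E z₀ w} = {w | E z₁ w} :=
    Set.ext fun _ => ⟨hE.trans (hE.symm hEz), hE.trans hEz⟩
  have hclass₁ : code '' {w | E z₀ w} ∈ 𝔇 (pair x (code z₁)) := hclass_eq ▸ hclass z₁
  exact hCclass z₀ hz₀ <|
    hinter _ _ (hCindep z₀ hz₀ z₁ hz₁ hne) _ (hclass z₀) hclass₁

/-- from a perfect independent set to pairwise inequivalent elements.
If `E` is an equivalence relation on Cantor space, `E` is definable from `x`, and
`C` is a set of points pairwise independent over `x` (coding points as elements of
`Ω`) none of whose `E`-classes is `x`-definable, then `C` consists of pairwise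
`E`-inequivalent elements. -/
theorem perfect_set_inequivalent {Ω : Type*}
    (D : Ω → Set Ω) (𝔇 : Ω → Set (Set Ω)) (pair : Ω → Ω → Ω)
    (indep : Ω → Ω → Ω → Prop)
    -- coding of points of Cantor space as elements of Ω (via neighborhood filters)
    (code : (ℕ → Bool) → Ω)
    (hcode : Function.Injective code)
    (E : (ℕ → Bool) → (ℕ → Bool) → Prop)
    (hE : Equivalence E)
    (x : Ω)
    -- symmetry, heredity, transitivity, strengthened duplication, product:
    (hsymm : ∀ x' y₀ y₁, indep x' y₀ y₁ → indep x' y₁ y₀)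
    (hhered : ∀ x' y₀ y₁ y₀', y₀' ∈ D (pair x' y₀) → indep x' y₀ y₁ →
      indep x' y₀' y₁)
    (htrans : ∀ x' y₀ y₁ z, indep x' y₀ y₁ → indep (pair x' y₀) z y₁ →
      indep x' (pair y₀ z) y₁)
    (hdup' : ∀ x' y₀, ∀ A ∈ 𝔇 x', A.Nonempty → ∃ y₁ ∈ A, indep x' y₀ y₁)
    (hprod : ∀ x' y₀ y₁, ∀ A ∈ 𝔇 x', indep x' y₀ y₁ → pair y₀ y₁ ∈ A →
      ∃ B₀ ∈ 𝔇 x', ∃ B₁ ∈ 𝔇 x', y₀ ∈ B₀ ∧ y₁ ∈ B₁ ∧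
        ∀ y₀' ∈ B₀, ∀ y₁' ∈ B₁, indep x' y₀' y₁' → pair y₀' y₁' ∈ A)
    -- the intersection consequence: a set definable both from (x,y₀) and from
    -- (x,y₁) with y₀ ⫫[x] y₁ is definable from x
    (hinter : ∀ y₀ y₁, indep x y₀ y₁ →
      ∀ A : Set Ω, A ∈ 𝔇 (pair x y₀) → A ∈ 𝔇 (pair x y₁) → A ∈ 𝔇 x)
    -- each E-class is definable from x together with any of its members
    (hclass : ∀ z : ℕ → Bool, code '' {w | E z w} ∈ 𝔇 (pair x (code z)))
    (C : Set (ℕ → Bool))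
    -- C consists of elements pairwise independent over x
    (hCindep : ∀ z₀ ∈ C, ∀ z₁ ∈ C, z₀ ≠ z₁ → indep x (code z₀) (code z₁))
    -- no element of C has its E-class definable from x
    (hCclass : ∀ z ∈ C, code '' {w | E z w} ∉ 𝔇 x) :
    ∀ z₀ ∈ C, ∀ z₁ ∈ C, z₀ ≠ z₁ → ¬ E z₀ z₁ :=
  perfect_set_inequivalent_general 𝔇 pair indep code E hE x hinter hclass C hCindep hCclass
end

section
/- Closure of σ-ideals under well-ordered unions: let Z be a Polish space, I a σ-ideal on Z σ-generated by closed sets, and A a well-orderable collection of sets in I all belonging to 𝔇(x) and with A ⊆ 𝔇(x). If there are only countably many closed subsets of Z in D(x), and every member of 𝔇(x) ∩ I is covered by the union of the closed sets in D(x) ∩ I, then ⋃A ∈ I. -/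
theorem sUnion_mem_of_countable {α : Type*} {I : Set (Set α)} (hIempty : ∅ ∈ I)
    (hIσ : ∀ f : ℕ → Set α, (∀ n, f n ∈ I) → (⋃ n, f n) ∈ I)
    {S : Set (Set α)} (hS : S.Countable) (hSI : S ⊆ I) : ⋃₀ S ∈ I := by
  rcases S.eq_empty_or_nonempty with rfl | hne
  · simpa using hIempty
  · obtain ⟨f, rfl⟩ := hS.exists_eq_range hne
    rw [Set.sUnion_range]
    exact hIσ f fun n => hSI (Set.mem_range_self n)

theorem sigmaIdeal_wellOrdered_union_general {Z : Type*} [TopologicalSpace Z]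
    (I : Set (Set Z))
    -- I is a σ-ideal:
    (hIempty : ∅ ∈ I)
    (hIdown : ∀ s t : Set Z, s ⊆ t → t ∈ I → s ∈ I)
    (hIσ : ∀ f : ℕ → Set Z, (∀ n, f n ∈ I) → (⋃ n, f n) ∈ I)
    -- the subsets of Z lying in the definable closure D(x)
    (Dx : Set (Set Z))
    -- inaccessibility: only countably many closed subsets of Z in D(x)
    (hctble : {C ∈ Dx | IsClosed C}.Countable)
    -- consequence of the independence axioms: every x-definable member of I is
    -- covered by the union of the closed sets in D(x) ∩ I
    (hcover : ∀ s ∈ Dx, s ∈ I → s ⊆ ⋃₀ {C | C ∈ Dx ∧ IsClosed C ∧ C ∈ I})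
    (A : Set (Set Z))
    (hAI : ∀ s ∈ A, s ∈ I)
    (hADx : A ⊆ Dx) :
    ⋃₀ A ∈ I := by
  have hcountable : {C | C ∈ Dx ∧ IsClosed C ∧ C ∈ I}.Countable :=
    hctble.mono fun _ hC => Set.mem_sep hC.1 hC.2.1
  have hunion_mem : ⋃₀ {C | C ∈ Dx ∧ IsClosed C ∧ C ∈ I} ∈ I :=
    sUnion_mem_of_countable hIempty hIσ hcountable fun C hC => hC.2.2
  refine hIdown _ _ (Set.sUnion_subset fun s hs => ?_) hunion_mem
  exact hcover s (hADx hs) (hAI s hs)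

/-- closure of σ-ideals σ-generated by closed sets under
well-ordered unions. Let `Z` be Polish, `I` a σ-ideal on `Z` σ-generated by
closed sets, `Dx` the family of subsets of `Z` in the definable closure `D(x)`,
and `A` a (well-orderable) collection of sets in `I` all belonging to the
`x`-definable sets, with `A ⊆ Dx`. If there are only countably many closed
subsets of `Z` in `D(x)` and every member of `𝔇(x) ∩ I` is covered by the union
of the closed sets in `D(x) ∩ I`, then `⋃ A ∈ I`. -/
theorem sigmaIdeal_wellOrdered_union {Z : Type*} [TopologicalSpace Z]
    [PolishSpace Z]
    (I : Set (Set Z))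
    -- I is a σ-ideal:
    (hIempty : ∅ ∈ I)
    (hIdown : ∀ s t : Set Z, s ⊆ t → t ∈ I → s ∈ I)
    (hIσ : ∀ f : ℕ → Set Z, (∀ n, f n ∈ I) → (⋃ n, f n) ∈ I)
    -- I is σ-generated by closed sets:
    (hIgen : ∀ s ∈ I, ∃ f : ℕ → Set Z,
      (∀ n, IsClosed (f n) ∧ f n ∈ I) ∧ s ⊆ ⋃ n, f n)
    -- the subsets of Z lying in the definable closure D(x)
    (Dx : Set (Set Z))
    -- inaccessibility: only countably many closed subsets of Z in D(x)
    (hctble : {C ∈ Dx | IsClosed C}.Countable)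
    -- consequence of the independence axioms: every x-definable member of I is
    -- covered by the union of the closed sets in D(x) ∩ I
    (hcover : ∀ s ∈ Dx, s ∈ I → s ⊆ ⋃₀ {C | C ∈ Dx ∧ IsClosed C ∧ C ∈ I})
    (A : Set (Set Z))
    (hAI : ∀ s ∈ A, s ∈ I)
    (hADx : A ⊆ Dx) :
    ⋃₀ A ∈ I :=
  sigmaIdeal_wellOrdered_union_general I hIempty hIdown hIσ Dx hctble hcover A hAI hADx
end
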